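/- Lower bound from α*: Let T be a tournament, S a set of demand arcs in which every vertex has at most one demand in-neighbor, F a feedback arc set of T, g : V(F) → {0,...,log n} a function, and define α*_g(v) = g(v) for v ∈ V(F), and otherwise α*_g(v) is the minimum natural number such that (1) α*_g(v) > α*_g(w) for every demand arc (v,w) ∈ S, and (2) α*_g(v) ≠ α*_g(w) whenever some u satisfies (u,v), (u,w) ∈ S and (w is weaker than v or w ∈ V(F)). If H is a spanning binomial arborescence of T containing all arcs of S such that α_H(x) = α*_g(x) for every x in Lose(S) ∩ V(H), then α_H(v) ≥ α*_g(v) for every vertex v of H. -/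

import Mathlib

universe u

variable {V : Type*} [DecidableEq V]

/-- A binomial arborescence over relation `A`, recorded with its vertex set,
its arc set, its root and its height. -/
inductive IsBAE (A : V → V → Prop) : Finset V → Finset (V × V) → V → ℕ → Prop
  | single (a : V) : IsBAE A {a} ∅ a 0
  | join {s t : Finset V} {E F : Finset (V × V)} {a b : V} {i : ℕ} :
      IsBAE A s E a i → IsBAE A t F b i → Disjoint s t → A a b →
      IsBAE A (s ∪ t) (insert (a, b) (E ∪ F)) a (i + 1)

/-- Classical filter on a finset (no decidability assumptions needed). -/
noncomputable def cfilter {α : Type*} (p : α → Prop) (s : Finset α) : Finset α :=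
  @Finset.filter _ p (fun _ => Classical.dec _) s

/-- The descendants (inside ambient vertex set `s`) of `x` in the digraph with arc set `E`:
vertices reachable from `x`, including `x` itself (when `x ∈ s`). -/
noncomputable def desc (s : Finset V) (E : Finset (V × V)) (x : V) : Finset V :=
  cfilter (fun y => Relation.ReflTransGen (fun a b => (a, b) ∈ E) x y) s

/-- The height `α_H(x)` of a vertex: log base 2 of its number of descendants. -/
noncomputable def hgt (s : Finset V) (E : Finset (V × V)) (x : V) : ℕ :=
  Nat.log 2 (desc s E x).card

/-- The arcs of `E` lying within the subtree of descendants of `x`. -/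
noncomputable def subArcs (s : Finset V) (E : Finset (V × V)) (x : V) : Finset (V × V) :=
  cfilter (fun e => e.1 ∈ desc s E x ∧ e.2 ∈ desc s E x) E

/-!
Heights in a binomial arborescence strictly decrease along arcs. A vertex of `V(F)` either loses
a demand match, where `α_H = α*_g` by assumption, or is the root, whose height `m` bounds `g`.
For any other vertex `v`, the number `α_H(v)` itself satisfies the two conditions whose least
solution is `α*_g(v)`: (1) because every demand child `w` loses, so
`α_H(v) > α_H(w) = α*_g(w)`, and (2) because it is vacuous unless `v` loses, and then
`α_H(v) = α*_g(v)`.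
-/

section Descendants

omit [DecidableEq V]

variable {s t u : Finset V} {E F : Finset (V × V)} {x y : V}

theorem mem_desc :
    y ∈ desc s E x ↔ y ∈ s ∧ Relation.ReflTransGen (fun a b => (a, b) ∈ E) x y := by
  simp [desc, cfilter]

theorem desc_subset : desc s E x ⊆ s := fun _ hy => (mem_desc.mp hy).1

theorem desc_mono (hst : s ⊆ t) (hEF : E ⊆ F) : desc s E x ⊆ desc t F x := fun _ hy =>
  have ⟨hys, hxy⟩ := mem_desc.mp hy
  mem_desc.mpr ⟨hst hys, Relation.ReflTransGen.mono (fun _ _ h => hEF h) _ _ hxy⟩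

theorem hgt_le_log_card : hgt s E x ≤ Nat.log 2 s.card :=
  Nat.log_mono_right (Finset.card_le_card desc_subset)

theorem desc_eq_of_closed {c : Finset V} (hct : c ⊆ t) (htu : t ⊆ u) (hFE : F ⊆ E)
    (hclosed : ∀ p q, (p, q) ∈ E → p ∈ c → (p, q) ∈ F ∧ q ∈ c) (hx : x ∈ c) :
    desc u E x = desc t F x := by
  refine subset_antisymm (fun y hy => ?_) (desc_mono htu hFE)
  obtain ⟨-, hxy⟩ := mem_desc.mp hy
  clear hy
  have hpath : y ∈ c ∧ Relation.ReflTransGen (fun a b => (a, b) ∈ F) x y := by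
    induction hxy with
    | refl => exact ⟨hx, .refl⟩
    | tail _ hstep ih =>
      obtain ⟨hstepF, hq⟩ := hclosed _ _ hstep ih.1
      exact ⟨hq, ih.2.tail hstepF⟩
  exact mem_desc.mpr ⟨hct hpath.1, hpath.2⟩

end Descendants

namespace IsBAE

variable {A : V → V → Prop} {s t : Finset V} {E F : Finset (V × V)} {a b : V} {i j : ℕ}

theorem root_mem (h : IsBAE A s E a i) : a ∈ s := by
  induction h with
  | single a => exact Finset.mem_singleton_self a
  | join _ _ _ _ ih _ => exact Finset.mem_union_left _ ih

theorem card_eq (h : IsBAE A s E a i) : s.card = 2 ^ i := by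
  induction h with
  | single => rfl
  | join _ _ hdisj _ ih₁ ih₂ =>
    rw [Finset.card_union_of_disjoint hdisj, ih₁, ih₂, pow_succ, mul_two]

theorem mem_of_mem_arcs (h : IsBAE A s E a i) {e : V × V} (he : e ∈ E) : e.1 ∈ s ∧ e.2 ∈ s := by
  induction h with
  | single => simp at he
  | join h₁ h₂ _ _ ih₁ ih₂ =>
    rcases Finset.mem_insert.mp he with rfl | he
    · exact ⟨Finset.mem_union_left _ h₁.root_mem, Finset.mem_union_right _ h₂.root_mem⟩
    rcases Finset.mem_union.mp he with he | he
    · exact (ih₁ he).imp (Finset.mem_union_left _) (Finset.mem_union_left _)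
    · exact (ih₂ he).imp (Finset.mem_union_right _) (Finset.mem_union_right _)

theorem snd_ne_root (h : IsBAE A s E a i) {e : V × V} (he : e ∈ E) : e.2 ≠ a := by
  induction h with
  | single => simp at he
  | join h₁ h₂ hdisj _ ih₁ _ =>
    have ha : _ ∉ _ := Finset.disjoint_left.mp hdisj h₁.root_mem
    rcases Finset.mem_insert.mp he with rfl | he
    · exact fun hb => ha (hb ▸ h₂.root_mem)
    rcases Finset.mem_union.mp he with he | he
    · exact ih₁ he
    · exact fun hq => ha (hq ▸ (h₂.mem_of_mem_arcs he).2)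

theorem desc_root (h : IsBAE A s E a i) : desc s E a = s := by
  induction h with
  | single a =>
    refine subset_antisymm desc_subset fun y hy => mem_desc.mpr ⟨hy, ?_⟩
    rw [Finset.mem_singleton.mp hy]
  | @join s t E F a b i _ _ _ _ ih₁ ih₂ =>
    have hE : E ⊆ insert (a, b) (E ∪ F) := Finset.subset_union_left.trans (Finset.subset_insert _ _)
    have hF : F ⊆ insert (a, b) (E ∪ F) := Finset.subset_union_right.trans (Finset.subset_insert _ _)
    refine subset_antisymm desc_subset fun y hy => ?_
    rcases Finset.mem_union.mp hy with hy | hy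
    · exact desc_mono Finset.subset_union_left hE (ih₁.symm ▸ hy)
    · obtain ⟨-, hby⟩ := mem_desc.mp (desc_mono (Finset.subset_union_right : t ⊆ s ∪ t) hF (ih₂.symm ▸ hy))
      exact mem_desc.mpr ⟨Finset.mem_union_right _ hy, .head (Finset.mem_insert_self _ _) hby⟩

theorem hgt_root (h : IsBAE A s E a i) : hgt s E a = i := by
  rw [hgt, h.desc_root, h.card_eq, Nat.log_pow one_lt_two]

theorem hgt_le (h : IsBAE A s E a i) (x : V) : hgt s E x ≤ i :=
  hgt_le_log_card.trans (by rw [h.card_eq, Nat.log_pow one_lt_two])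

section Join

variable (h₁ : IsBAE A s E a i) (h₂ : IsBAE A t F b j) (hdisj : Disjoint s t)
include h₁ h₂ hdisj

theorem hgt_join_right {x : V} (hx : x ∈ t) :
    hgt (s ∪ t) (insert (a, b) (E ∪ F)) x = hgt t F x := by
  rw [hgt, hgt, desc_eq_of_closed subset_rfl Finset.subset_union_right
    (Finset.subset_union_right.trans (Finset.subset_insert _ _)) _ hx]
  intro p q hpq hp
  rcases Finset.mem_insert.mp hpq with hpq | hpq
  · cases hpq
    exact absurd hp (Finset.disjoint_left.mp hdisj h₁.root_mem)
  rcases Finset.mem_union.mp hpq with hpq | hpq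
  · exact absurd hp (Finset.disjoint_left.mp hdisj (h₁.mem_of_mem_arcs hpq).1)
  · exact ⟨hpq, (h₂.mem_of_mem_arcs hpq).2⟩

theorem hgt_join_left {x : V} (hx : x ∈ s) (hxa : x ≠ a) :
    hgt (s ∪ t) (insert (a, b) (E ∪ F)) x = hgt s E x := by
  -- `s.erase a` is closed under the arcs, since no arc enters the root `a`.
  rw [hgt, hgt, desc_eq_of_closed (Finset.erase_subset a s) Finset.subset_union_left
    (Finset.subset_union_left.trans (Finset.subset_insert _ _)) _ (Finset.mem_erase.mpr ⟨hxa, hx⟩)]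
  intro p q hpq hp
  rcases Finset.mem_insert.mp hpq with hpq | hpq
  · cases hpq
    exact absurd rfl (Finset.mem_erase.mp hp).1
  rcases Finset.mem_union.mp hpq with hpq | hpq
  · exact ⟨hpq, Finset.mem_erase.mpr ⟨h₁.snd_ne_root hpq, (h₁.mem_of_mem_arcs hpq).2⟩⟩
  · exact absurd (h₂.mem_of_mem_arcs hpq).1
      (Finset.disjoint_left.mp hdisj (Finset.mem_of_mem_erase hp))

end Join

theorem hgt_snd_lt_hgt_fst (h : IsBAE A s E a i) {e : V × V} (he : e ∈ E) :
    hgt s E e.2 < hgt s E e.1 := by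
  induction h with
  | single => simp at he
  | @join s t E F a b i h₁ h₂ hdisj hab ih₁ ih₂ =>
    have hjoin := h₁.join h₂ hdisj hab
    rcases Finset.mem_insert.mp he with rfl | he
    · rw [hjoin.hgt_root, hgt_join_right h₁ h₂ hdisj h₂.root_mem, h₂.hgt_root]
      exact Nat.lt_succ_self _
    rcases Finset.mem_union.mp he with he | he
    · obtain ⟨h1s, h2s⟩ := h₁.mem_of_mem_arcs he
      rw [hgt_join_left h₁ h₂ hdisj h2s (h₁.snd_ne_root he)]
      by_cases h1a : e.1 = a
      · rw [h1a, hjoin.hgt_root]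
        exact Nat.lt_succ_of_le (h₁.hgt_le _)
      · rw [hgt_join_left h₁ h₂ hdisj h1s h1a]
        exact ih₁ he
    · obtain ⟨h1t, h2t⟩ := h₂.mem_of_mem_arcs he
      rw [hgt_join_right h₁ h₂ hdisj h1t, hgt_join_right h₁ h₂ hdisj h2t]
      exact ih₂ he

end IsBAE

/-- The linear order on `V` is the strength order `σ` (smaller = stronger), `E` is the arc set
of `H`, rooted at `r`, and `α` is `α*_g`. -/
theorem alpha_star_lower_bound_general [Fintype V] [LinearOrder V] (beats : V → V → Prop)
    (m : ℕ)
    (S : Finset (V × V))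
    (VF : Finset V)
    (g : V → ℕ) (hg : ∀ v ∈ VF, g v ≤ m)
    (α : V → ℕ)
    (hα1 : ∀ v ∈ VF, α v = g v)
    (hα2 : ∀ v ∉ VF, IsLeast {k : ℕ |
        (∀ w : V, (v, w) ∈ S → α w < k) ∧
        (∀ u w : V, (u, v) ∈ S → (u, w) ∈ S → (v < w ∨ w ∈ VF) → k ≠ α w)} (α v))
    (E : Finset (V × V)) (r : V)
    (hSBA : IsBAE beats Finset.univ E r m)
    (hcontain : ∀ e ∈ S, e ∈ E)
    (hfeedback : ∀ v ∈ VF, (∃ u : V, (u, v) ∈ S) ∨ v = r)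
    (hcompact : ∀ x : V, (∃ u : V, (u, x) ∈ S) → hgt Finset.univ E x = α x) :
    ∀ v : V, α v ≤ hgt Finset.univ E v := by
  intro v
  by_cases hv : v ∈ VF
  · rcases hfeedback v hv with ⟨u, hu⟩ | rfl
    · exact (hcompact v ⟨u, hu⟩).ge
    · rw [hα1 v hv, hSBA.hgt_root]
      exact hg v hv
  · refine (hα2 v hv).2 ⟨fun w hvw => ?_, fun u w huv huw hw => ?_⟩
    · rw [← hcompact w ⟨v, hvw⟩]
      exact hSBA.hgt_snd_lt_hgt_fst (hcontain _ hvw)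
    · rw [hcompact v ⟨u, huv⟩]
      exact (hα2 v hv).1.2 u w huv huw hw

/-- Lower bound from `α*`. The linear order on `V` is the strength order `σ` (smaller =
stronger), `F` is the set of backward ("upset") arcs, `VF` the set of endpoints of arcs
of `F`, every vertex has at most one demand in-neighbor, and (as in the paper's standing
assumption) every feedback vertex either loses a demand match or is the root. The
function `α` is `α*_g`: it equals `g` on `VF`, and on every other vertex it is the least
natural number exceeding `α` of all its demand children and avoiding `α` of every demand
sibling that is weaker or in `VF`. If `H` is a spanning binomial arborescence containing
all demand arcs such that `α_H(x) = α(x)` for every `x` losing a demand match, then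
`α_H(v) ≥ α(v)` for every vertex `v`. -/
theorem alpha_star_lower_bound [Fintype V] [LinearOrder V] (beats : V → V → Prop)
    (hasym : ∀ a b : V, beats a b → ¬ beats b a)
    (htotal : ∀ a b : V, a ≠ b → beats a b ∨ beats b a)
    (m : ℕ) (hcard : Fintype.card V = 2 ^ m)
    (S : Finset (V × V))
    (hone : ∀ u w v : V, (u, v) ∈ S → (w, v) ∈ S → u = w)
    (F : Finset (V × V))
    (hF : ∀ a b : V, beats a b → ((a, b) ∈ F ↔ b < a))
    (VF : Finset V) (hVF : ∀ x : V, x ∈ VF ↔ ∃ e ∈ F, e.1 = x ∨ e.2 = x)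
    (g : V → ℕ) (hg : ∀ v ∈ VF, g v ≤ m)
    (α : V → ℕ)
    (hα1 : ∀ v ∈ VF, α v = g v)
    (hα2 : ∀ v ∉ VF, IsLeast {k : ℕ |
        (∀ w : V, (v, w) ∈ S → α w < k) ∧
        (∀ u w : V, (u, v) ∈ S → (u, w) ∈ S → (v < w ∨ w ∈ VF) → k ≠ α w)} (α v))
    (E : Finset (V × V)) (r : V)
    (hSBA : IsBAE beats Finset.univ E r m)
    (hcontain : ∀ e ∈ S, e ∈ E)
    (hfeedback : ∀ v ∈ VF, (∃ u : V, (u, v) ∈ S) ∨ v = r)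
    (hcompact : ∀ x : V, (∃ u : V, (u, x) ∈ S) → hgt Finset.univ E x = α x) :
    ∀ v : V, α v ≤ hgt Finset.univ E v :=
  alpha_star_lower_bound_general beats m S VF g hg α hα1 hα2 E r hSBA hcontain hfeedback hcompact
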